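/- Let K routes have lengths l_1, ..., l_K, with pick-up points c_{k,1}, ..., c_{k,l_k}, strictly increasing arrival times t_{k,1} < ... < t_{k,l_k}, rates λ_c ≥ 0, and outcome probabilities p(u) defined via the time-varying pick-up probabilities P(c, Δ) = 1 - exp(-λ_c · Δ) with outcome-dependent intervals Δ_{k,v}(u). Then the sum of p(u) over all outcomes u ∈ ∏_{k=1}^{K} {1, ..., l_k + 1} equals 1. -/

import Mathlib

/-- Pick-up probability at a point of rate `lam` after an interval `Δ`. -/
noncomputable def pickProb (lam : ℝ) (Δ : ℝ) : ℝ := 1 - Real.exp (-(lam * Δ))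

open scoped Classical in
/-- The arrival time of the last still-cruising taxicab to visit the point `c k v`
strictly before (in the time-then-index order) taxicab `k` reaches its `v`-th point,
given outcome `u`; it is `0` if no such visit exists. -/
noncomputable def prevVisitTime {C : Type*} {K : ℕ} (l : Fin K → ℕ) (c : Fin K → ℕ → C)
    (t : Fin K → ℕ → ℝ) (u : Fin K → ℕ) (k : Fin K) (v : ℕ) : ℝ :=
  let S : Finset (Fin K × ℕ) :=
    (Finset.univ ×ˢ Finset.Icc 1 (Finset.univ.sup l)).filter
      (fun kv => kv.2 ≤ l kv.1 ∧ kv.2 ≤ u kv.1 ∧ c kv.1 kv.2 = c k v ∧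
        (t kv.1 kv.2 < t k v ∨ (t kv.1 kv.2 = t k v ∧ kv.1 < k)))
  if h : S.Nonempty then S.sup' h (fun kv => t kv.1 kv.2) else 0

/-- The inter-arrival interval `Δ_{k,v}(u)` at the `v`-th point of route `k`
under outcome `u`. -/
noncomputable def interArrival {C : Type*} {K : ℕ} (l : Fin K → ℕ) (c : Fin K → ℕ → C)
    (t : Fin K → ℕ → ℝ) (u : Fin K → ℕ) (k : Fin K) (v : ℕ) : ℝ :=
  t k v - prevVisitTime l c t u k v

/-- The probability `p(u)` of outcome `u` for the recommendation `(l, c, t)`. -/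
noncomputable def outcomeProb {C : Type*} {K : ℕ} (lam : C → ℝ) (l : Fin K → ℕ)
    (c : Fin K → ℕ → C) (t : Fin K → ℕ → ℝ) (u : Fin K → ℕ) : ℝ :=
  ∏ k : Fin K,
    ((∏ v ∈ Finset.Icc 1 (u k - 1),
        (1 - pickProb (lam (c k v)) (interArrival l c t u k v))) *
      (if u k ≤ l k then pickProb (lam (c k (u k))) (interArrival l c t u k (u k))
        else 1))

/-!
Induct on the total number of visits. Take the last visit `(k₀, m)` in the order "by time, ties
by taxicab index". Being last, it is the previous visit of no other visit, so no interval `Δ`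
depends on whether taxicab `k₀` is still cruising there; hence dropping this visit only merges,
on route `k₀`, the outcome "picked up at `m`" with "never picked up". The probabilities of these
two outcomes share the prefix `∏ (1 - P)` over the first `m - 1` visits, and they add up to it
because `P + (1 - P) = 1`.
-/

open Finset Function

section Route

variable {R : Type*} [CommRing R]

def routeProb (q : ℕ → R) (len u : ℕ) : R :=
  (∏ v ∈ Icc 1 (u - 1), (1 - q v)) * if u ≤ len then q u else 1

lemma routeProb_congr {q q' : ℕ → R} {len u : ℕ} (hu₁ : 1 ≤ u) (hu : u ≤ len + 1)
    (h : ∀ v, 1 ≤ v → v ≤ len → q v = q' v) : routeProb q len u = routeProb q' len u := by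
  unfold routeProb
  congr 1
  · refine prod_congr rfl fun v hv => ?_
    rw [mem_Icc] at hv
    rw [h v hv.1 (by omega)]
  · split_ifs with hle
    · exact h u hu₁ hle
    · rfl

lemma routeProb_succ_of_le (q : ℕ → R) {n u : ℕ} (hu : u ≤ n) :
    routeProb q (n + 1) u = routeProb q n u := by
  simp only [routeProb, if_pos hu, if_pos (hu.trans n.le_succ)]

lemma routeProb_succ_add_routeProb_succ (q : ℕ → R) (n : ℕ) :
    routeProb q (n + 1) (n + 1) + routeProb q (n + 1) (n + 2) = routeProb q n (n + 1) := by
  have hprefix : ∏ v ∈ Icc 1 (n + 1), (1 - q v) = (∏ v ∈ Icc 1 n, (1 - q v)) * (1 - q (n + 1)) :=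
    prod_Icc_succ_top (Nat.le_add_left 1 n) _
  simp only [routeProb, Nat.add_sub_cancel, le_refl, if_true, show ¬n + 2 ≤ n + 1 by omega,
    show ¬n + 1 ≤ n by omega, if_false, show n + 2 - 1 = n + 1 from rfl, hprefix]
  ring

end Route

section Outcomes

variable {ι : Type*} [Fintype ι] [DecidableEq ι]

def outcomes (l : ι → ℕ) : Finset (ι → ℕ) := Fintype.piFinset fun k => Icc 1 (l k + 1)

lemma mem_outcomes {l u : ι → ℕ} : u ∈ outcomes l ↔ ∀ k, 1 ≤ u k ∧ u k ≤ l k + 1 := by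
  simp [outcomes]

lemma outcomes_mono {l l' : ι → ℕ} (h : l ≤ l') : outcomes l ⊆ outcomes l' := fun _ hu =>
  mem_outcomes.2 fun k =>
    ⟨(mem_outcomes.1 hu k).1, (mem_outcomes.1 hu k).2.trans (Nat.add_le_add_right (h k) 1)⟩

lemma update_mem_outcomes {l l' u : ι → ℕ} {i : ι} {a : ℕ} (hu : u ∈ outcomes l)
    (ha : 1 ≤ a ∧ a ≤ l' i + 1) (hl : ∀ k ≠ i, l k ≤ l' k) : update u i a ∈ outcomes l' := by
  refine mem_outcomes.2 fun k => ?_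
  rcases eq_or_ne k i with rfl | hk
  · rwa [update_self]
  · rw [update_of_ne hk]
    exact ⟨(mem_outcomes.1 hu k).1, (mem_outcomes.1 hu k).2.trans (Nat.add_le_add_right (hl k hk) 1)⟩

lemma filter_outcomes_le {l : ι → ℕ} {i : ι} {n : ℕ} (hn : n ≤ l i) :
    {u ∈ outcomes l | u i ≤ n + 1} = outcomes (update l i n) := by
  ext u
  rw [mem_filter]
  refine ⟨fun ⟨hu, hui⟩ => ?_, fun hu => ⟨?_, by simpa using (mem_outcomes.1 hu i).2⟩⟩
  · simpa using update_mem_outcomes (a := u i) (l' := update l i n) hu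
      ⟨(mem_outcomes.1 hu i).1, by simpa⟩ fun k hk => (update_of_ne hk _ _).ge
  · exact outcomes_mono (update_le_iff.2 ⟨hn, fun _ _ => le_rfl⟩) hu

lemma sum_outcomes_eq_sum_update {M : Type*} [AddCommMonoid M] {l : ι → ℕ} {i : ι} {n : ℕ}
    (hi : l i = n + 1) (f : (ι → ℕ) → M) :
    ∑ u ∈ outcomes l, f u =
      ∑ u ∈ outcomes (update l i n), (f u + if u i = n + 1 then f (update u i (n + 2)) else 0) := by
  rw [sum_add_distrib, ← sum_filter, ← sum_filter_add_sum_filter_not _ (fun u => u i ≤ n + 1),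
    filter_outcomes_le (by omega)]
  congr 1
  have hback : ∀ u ∈ outcomes l, ¬u i ≤ n + 1 → update (update u i (n + 1)) i (n + 2) = u := by
    intro u hu hui
    have := (mem_outcomes.1 hu i).2
    rw [update_idem, update_eq_iff]
    exact ⟨by omega, fun _ _ => rfl⟩
  refine sum_nbij' (update · i (n + 1)) (update · i (n + 2)) ?_ ?_ ?_ ?_ ?_
  · simp only [mem_filter, update_self, and_true]
    exact fun u ⟨hu, _⟩ => update_mem_outcomes hu (by simp) fun k hk => (update_of_ne hk _ _).ge
  · simp only [mem_filter, update_self]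
    exact fun u ⟨hu, _⟩ => ⟨update_mem_outcomes hu (by omega) fun k hk => (update_of_ne hk _ _).le,
      by omega⟩
  · simp only [mem_filter]
    exact fun u ⟨hu, hui⟩ => hback u hu hui
  · simp only [mem_filter]
    rintro u ⟨-, hui⟩
    rw [update_idem, ← hui, update_eq_self]
  · simp only [mem_filter]
    exact fun u ⟨hu, hui⟩ => (congrArg f (hback u hu hui)).symm

end Outcomes

section Visits

variable {C : Type*} {K : ℕ}

lemma outcomeProb_eq_prod_routeProb (lam : C → ℝ) (l : Fin K → ℕ) (c : Fin K → ℕ → C)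
    (t : Fin K → ℕ → ℝ) (u : Fin K → ℕ) :
    outcomeProb lam l c t u =
      ∏ k, routeProb (fun v => pickProb (lam (c k v)) (interArrival l c t u k v)) (l k) (u k) :=
  rfl

/-- The order on visits used by `prevVisitTime`: by time, ties broken by the taxicab index. -/
abbrev visitKey (t : Fin K → ℕ → ℝ) (k : Fin K) (v : ℕ) : ℝ ×ₗ Fin K := toLex (t k v, k)

lemma dite_sup'_congr {α β : Type*} [SemilatticeSup β] [Zero β] {s s' : Finset α} (h : s = s')
    (f : α → β) :
    (if hs : s.Nonempty then s.sup' hs f else 0) =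
      if hs : s'.Nonempty then s'.sup' hs f else 0 := by
  subst h; rfl

lemma prevVisitTime_congr (c : Fin K → ℕ → C) (t : Fin K → ℕ → ℝ) {l l' u u' : Fin K → ℕ}
    {k : Fin K} {v : ℕ}
    (h : ∀ k' v', 1 ≤ v' → visitKey t k' v' < visitKey t k v →
      (v' ≤ l k' ∧ v' ≤ u k' ↔ v' ≤ l' k' ∧ v' ≤ u' k')) :
    prevVisitTime l c t u k v = prevVisitTime l' c t u' k v := by
  refine dite_sup'_congr ?_ _
  ext ⟨k', v'⟩
  have hk' := h k' v'
  simp only [Prod.Lex.toLex_lt_toLex] at hk'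
  simp only [mem_filter, mem_product, mem_univ, mem_Icc, true_and]
  constructor
  · rintro ⟨⟨hv', -⟩, hl, hu, hc, hlt⟩
    obtain ⟨hl', hu'⟩ := (hk' hv' hlt).1 ⟨hl, hu⟩
    exact ⟨⟨hv', hl'.trans (le_sup (mem_univ k'))⟩, hl', hu', hc, hlt⟩
  · rintro ⟨⟨hv', -⟩, hl, hu, hc, hlt⟩
    obtain ⟨hl', hu'⟩ := (hk' hv' hlt).2 ⟨hl, hu⟩
    exact ⟨⟨hv', hl'.trans (le_sup (mem_univ k'))⟩, hl', hu', hc, hlt⟩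

lemma exists_last_visit {l : Fin K → ℕ} {t : Fin K → ℕ → ℝ}
    (ht : ∀ k v, 1 ≤ v → v < l k → t k v < t k (v + 1)) (hl : ∃ k, l k ≠ 0) :
    ∃ k₀, l k₀ ≠ 0 ∧ ∀ k v, 1 ≤ v → v ≤ l k → visitKey t k v ≤ visitKey t k₀ (l k₀) := by
  obtain ⟨k₁, hk₁⟩ := hl
  have hne : (univ.sigma fun k => Icc 1 (l k)).Nonempty := ⟨⟨k₁, 1⟩, by simp; omega⟩
  obtain ⟨⟨k₀, v₀⟩, hmem, hmax⟩ :=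
    exists_max_image _ (fun e : (_ : Fin K) × ℕ => visitKey t e.1 e.2) hne
  simp only [mem_sigma, mem_univ, mem_Icc, true_and] at hmem
  obtain rfl : v₀ = l k₀ := by
    by_contra hv₀
    refine (hmax ⟨k₀, v₀ + 1⟩ (by simp; omega)).not_gt ?_
    exact Prod.Lex.toLex_lt_toLex.2 (Or.inl (ht k₀ v₀ hmem.1 (by omega)))
  exact ⟨k₀, by omega, fun k v h1 h2 => hmax ⟨k, v⟩ (by simp [h1, h2])⟩

/-- The hypotheses on `ũ` say that it is `u`, or `update u k₀ (n + 2)` when `u k₀ = n + 1`. -/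
lemma interArrival_eq_update_of_le_last (c : Fin K → ℕ → C) (t : Fin K → ℕ → ℝ)
    {l u ũ : Fin K → ℕ} {k₀ k : Fin K} {n v : ℕ} (hk₀ : l k₀ = n + 1)
    (hv : visitKey t k v ≤ visitKey t k₀ (n + 1))
    (hũ : ∀ k ≠ k₀, ũ k = u k) (hũk₀ : min (ũ k₀) (n + 1) = u k₀) :
    interArrival l c t ũ k v = interArrival (update l k₀ n) c t u k v := by
  unfold interArrival
  congr 1
  refine prevVisitTime_congr c t fun k' v' _ hlt => ?_
  rcases eq_or_ne k' k₀ with rfl | hk'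
  · have : v' ≠ n + 1 := by rintro rfl; exact (hlt.trans_le hv).false
    rw [update_self, hk₀]
    omega
  · rw [update_of_ne hk', hũ k' hk']

lemma outcomeProb_add_outcomeProb_update (lam : C → ℝ) (c : Fin K → ℕ → C) (t : Fin K → ℕ → ℝ)
    {l u : Fin K → ℕ} {k₀ : Fin K} {n : ℕ} (hk₀ : l k₀ = n + 1)
    (hlast : ∀ k v, 1 ≤ v → v ≤ l k → visitKey t k v ≤ visitKey t k₀ (n + 1))
    (hu : u ∈ outcomes (update l k₀ n)) :
    outcomeProb lam l c t u +
        (if u k₀ = n + 1 then outcomeProb lam l c t (update u k₀ (n + 2)) else 0) =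
      outcomeProb lam (update l k₀ n) c t u := by
  set q := fun k v => pickProb (lam (c k v)) (interArrival (update l k₀ n) c t u k v)
  have hprod : ∀ ũ ∈ outcomes l, (∀ k ≠ k₀, ũ k = u k) → min (ũ k₀) (n + 1) = u k₀ →
      outcomeProb lam l c t ũ = ∏ k, routeProb (q k) (l k) (ũ k) := by
    intro ũ hmem hũ hũk₀
    refine prod_congr rfl fun k _ => routeProb_congr (mem_outcomes.1 hmem k).1
      (mem_outcomes.1 hmem k).2 fun v hv1 hv2 => ?_
    rw [interArrival_eq_update_of_le_last c t hk₀ (hlast k v hv1 hv2) hũ hũk₀]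
  rw [← filter_outcomes_le (show n ≤ l k₀ by omega), mem_filter] at hu
  obtain ⟨hu', huk₀⟩ := hu
  rw [hprod u hu' (fun _ _ => rfl) (by omega), outcomeProb_eq_prod_routeProb lam (update l k₀ n)]
  split_ifs with hun
  · rw [hprod (update u k₀ (n + 2)) (update_mem_outcomes hu' (by omega) fun _ _ => le_rfl)
      (fun k hk => update_of_ne hk _ _) (by simp [hun])]
    refine prod_add_prod_eq (mem_univ k₀) ?_ (fun k _ hk => ?_) (fun k _ hk => ?_)
    · simp only [update_self, hk₀, hun]
      exact routeProb_succ_add_routeProb_succ _ n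
    · rw [update_of_ne hk]
    · rw [update_of_ne hk, update_of_ne hk]
  · refine (add_zero _).trans (prod_congr rfl fun k _ => ?_)
    rcases eq_or_ne k k₀ with rfl | hk
    · rw [update_self, hk₀]
      exact routeProb_succ_of_le _ (by omega)
    · rw [update_of_ne hk]

end Visits

theorem cmsr_outcome_probabilities_sum_to_one_general {C : Type*} {K : ℕ}
    (lam : C → ℝ)
    (l : Fin K → ℕ) (c : Fin K → ℕ → C) (t : Fin K → ℕ → ℝ)
    (ht : ∀ (k : Fin K) (v : ℕ), 1 ≤ v → v < l k → t k v < t k (v + 1)) :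
    ∑ u ∈ Fintype.piFinset (fun k => Finset.Icc 1 (l k + 1)),
      outcomeProb lam l c t u = 1 := by
  change ∑ u ∈ outcomes l, outcomeProb lam l c t u = 1
  induction hs : ∑ k, l k generalizing l with
  | zero =>
    have hl : ∀ k, l k = 0 := by simpa using hs
    simp [outcomes, hl, outcomeProb_eq_prod_routeProb, routeProb]
  | succ s ih =>
    obtain ⟨k₀, hk₀, hlast⟩ := exists_last_visit ht (by by_contra! h; simp [h] at hs)
    obtain ⟨n, hn⟩ := Nat.exists_eq_add_one_of_ne_zero hk₀
    rw [hn] at hlast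
    rw [sum_outcomes_eq_sum_update hn,
      sum_congr rfl fun u hu => outcomeProb_add_outcomeProb_update lam c t hn hlast hu]
    have hle : update l k₀ n ≤ l := update_le_iff.2 ⟨by omega, fun _ _ => le_rfl⟩
    refine ih _ (fun k v hv hlt => ht k v hv (hlt.trans_le (hle k))) ?_
    have := sum_eq_add_sum_sdiff_singleton_of_mem (mem_univ k₀) l
    rw [sum_update_of_mem (mem_univ k₀)]
    omega

/-- time-varying CMSR outcome probabilities sum to one.
Let `K` routes have lengths `l k`, pick-up points `c k 1, ..., c k (l k)`, strictly
increasing arrival times `t k 1 < ... < t k (l k)`, rates `lam x ≥ 0`, and outcome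
probabilities `p(u)` defined via `P(x, Δ) = 1 - exp (-(lam x * Δ))` with the
outcome-dependent intervals `Δ_{k,v}(u)`.  Then the sum of `p(u)` over all outcomes
`u ∈ ∏_k {1, ..., l k + 1}` equals `1`. -/
theorem cmsr_outcome_probabilities_sum_to_one {C : Type*} {K : ℕ}
    (lam : C → ℝ) (hlam : ∀ x, 0 ≤ lam x)
    (l : Fin K → ℕ) (c : Fin K → ℕ → C) (t : Fin K → ℕ → ℝ)
    (ht : ∀ (k : Fin K) (v : ℕ), 1 ≤ v → v < l k → t k v < t k (v + 1)) :
    ∑ u ∈ Fintype.piFinset (fun k => Finset.Icc 1 (l k + 1)),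
      outcomeProb lam l c t u = 1 :=
  cmsr_outcome_probabilities_sum_to_one_general lam l c t ht
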